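/- arXiv:2009.06342 — 6 statements merged into one kernel-verified Lean document; each statement's English description precedes it below -/
import Mathlib

section
/- Any Moore machine (Q, Σ, Γ, δ, ρ, q₀) that solves the copy task over alphabet Σ ⊆ ℝ^m \ {0} with block length T has at least |Σ|^T states. Precisely: suppose that for every sequence x₁,…,x_T ∈ Σ^T, processing the input x₁,…,x_T, 0,…,0 (T trailing zero symbols) produces the output sequence whose last T entries are x₁,…,x_T. Then |Q| ≥ |Σ|^T. -/
/-- The iterated state of a Moore machine. -/
def mooreRun {σ Q : Type*} (δ : σ → Q → Q) (q₀ : Q) (xs : List σ) : Q :=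
  xs.foldl (fun q x => δ x q) q₀

/-- Theorem 2b: any Moore machine (input alphabet `Σ ∪ {0}` modeled as
`Option A`, zero symbol `none`) solving the copy task with block length `T`
— i.e. for every block `x₁,…,x_T ∈ Σ^T`, the outputs at time steps
`T+1,…,2T` of the input `x₁,…,x_T,0,…,0` are `x₁,…,x_T` — has at least
`|Σ|^T` states. -/
theorem moore_copy_card_ge {A Q : Type*} [Fintype A] [Fintype Q] (T : ℕ)
    (δ : Option A → Q → Q) (ρ : Q → A) (q₀ : Q)
    (hcopy : ∀ x : Fin T → A, ∀ i : Fin T,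
      ρ (mooreRun δ q₀
        (List.ofFn (fun j => some (x j)) ++ List.replicate ((i : ℕ) + 1) none))
        = x i) :
    Fintype.card A ^ T ≤ Fintype.card Q := by
  have hinj : Function.Injective
      (fun x : Fin T → A => mooreRun δ q₀ (List.ofFn fun j => some (x j))) := by
    intro x y hxy
    simp only at hxy
    funext i
    have hx := hcopy x i
    have hy := hcopy y i
    rw [mooreRun, List.foldl_append] at hx hy
    rw [← hx, ← hy]
    simp only [mooreRun] at hxy
    rw [hxy]
  calc Fintype.card A ^ T = Fintype.card (Fin T → A) := by
        simp [Fintype.card_fun]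
    _ ≤ Fintype.card Q := Fintype.card_le_of_injective _ hinj
end

section
/- (Cycle-removal lemma for RMMs) Let M be a reservoir memory machine and x₁,…,x_T an input sequence. Define an M-cycle as a contiguous subsequence x_{t'+1},…,x_t with 0 ≤ t' < t ≤ T and a_{t'} = a_t > 0 (where a_t is the memory address selected at step t, and a₀ = c(h₀)). Let x'₁,…,x'_τ be the M-cycle-reduced version of x₁,…,x_T, obtained by recursively removing the cycle with largest end index t and smallest start index t'. Then the final RMM state satisfies h_T = h'_τ, i.e., the final states for the original and cycle-reduced sequences coincide. -/
/-- The full state of a reservoir memory machine: current state `h`, last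
selected memory address `a` (`0` means "no memory access"), and the memory
contents (`none` = empty slot). -/
structure RMMState (H : Type*) where
  h : H
  a : ℕ
  mem : ℕ → Option H

/-- One step of the RMM dynamics (Equation 2 of the paper):
`h̃ = F(x, h)`, `a = c(h̃)`; if `a > 0` and slot `a` is empty, `h̃` is written
to slot `a`; the new state is `h̃` if `a = 0` and the content of slot `a`
otherwise. -/
def rmmStep {X H : Type*} (F : X → H → H) (c : H → ℕ)
    (s : RMMState H) (x : X) : RMMState H :=
  let ht := F x s.h
  let a := c ht
  let mem' : ℕ → Option H :=
    fun l => if l = a ∧ a ≠ 0 ∧ (s.mem a).isNone then some ht else s.mem l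
  { h := if a = 0 then ht else (mem' a).getD ht
    a := a
    mem := mem' }

/-- The initial RMM state: memory empty, except that `h₀` is stored at
address `c(h₀)` if `c(h₀) > 0`. -/
def rmmInit {H : Type*} (c : H → ℕ) (h₀ : H) : RMMState H :=
  { h := h₀
    a := c h₀
    mem := fun l => if l = c h₀ ∧ c h₀ ≠ 0 then some h₀ else none }

/-- The RMM state sequence driven by the input sequence `x 1, x 2, …`. -/
def rmmSeq {X H : Type*} (F : X → H → H) (c : H → ℕ) (h₀ : H)
    (x : ℕ → X) : ℕ → RMMState H
  | 0 => rmmInit c h₀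
  | t + 1 => rmmStep F c (rmmSeq F c h₀ x t) (x (t + 1))

/-- The RMM state after processing a finite input sequence. -/
def rmmRun {X H : Type*} (F : X → H → H) (c : H → ℕ) (h₀ : H)
    (xs : List X) : RMMState H :=
  xs.foldl (rmmStep F c) (rmmInit c h₀)

/-- The memory address selected after `t` input symbols of `xs`
(`a₀ = c(h₀)` for `t = 0`). -/
def rmmAddr {X H : Type*} (F : X → H → H) (c : H → ℕ) (h₀ : H)
    (xs : List X) (t : ℕ) : ℕ :=
  (rmmRun F c h₀ (xs.take t)).a

/-- An `M`-cycle of the input sequence `xs`: indices `0 ≤ t' < t ≤ |xs|`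
with `a_{t'} = a_t > 0`. -/
def IsRMMCycle {X H : Type*} (F : X → H → H) (c : H → ℕ) (h₀ : H)
    (xs : List X) (t' t : ℕ) : Prop :=
  t' < t ∧ t ≤ xs.length ∧ rmmAddr F c h₀ xs t' = rmmAddr F c h₀ xs t ∧
    rmmAddr F c h₀ xs t ≠ 0

/-- `CycleReduced F c h₀ xs ys` holds iff `ys` is the `M`-cycle-reduced
version of `xs`: recursively remove the cycle with largest end index `t` and
(for that `t`) smallest start index `t'`, until no cycle remains. -/
inductive CycleReduced {X H : Type*} (F : X → H → H) (c : H → ℕ) (h₀ : H) :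
    List X → List X → Prop
  | of_no_cycle (xs : List X)
      (hnone : ∀ t' t, ¬ IsRMMCycle F c h₀ xs t' t) :
      CycleReduced F c h₀ xs xs
  | of_cycle (xs ys : List X) (t' t : ℕ)
      (hcyc : IsRMMCycle F c h₀ xs t' t)
      (hmax : ∀ s' s, IsRMMCycle F c h₀ xs s' s → s ≤ t)
      (hmin : ∀ s', IsRMMCycle F c h₀ xs s' t → t' ≤ s')
      (hrec : CycleReduced F c h₀ (xs.take t' ++ xs.drop t) ys) :
      CycleReduced F c h₀ xs ys

section Aux

variable {X H : Type*} (F : X → H → H) (c : H → ℕ)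

/-- Memory is write-once: a filled slot keeps its value. -/
lemma rmm_mem_mono (L : List X) : ∀ (s : RMMState H) (l : ℕ) (v : H),
    s.mem l = some v → (L.foldl (rmmStep F c) s).mem l = some v := by
  induction L with
  | nil => intro s l v h; exact h
  | cons x L ih =>
    intro s l v h
    apply ih
    simp only [rmmStep]
    split
    · rename_i hc
      rw [hc.1] at h
      rw [h] at hc
      simp at hc
    · exact h

/-- A state stores its own `h` at its selected address (if nonzero). -/
def RMMGood (s : RMMState H) : Prop := s.a ≠ 0 → s.mem s.a = some s.h

lemma rmm_good_step (s : RMMState H) (x : X) : RMMGood (rmmStep F c s x) := by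
  intro ha
  simp only [rmmStep] at ha ⊢
  rcases hmem : s.mem (c (F x s.h)) with _ | v
  · simp [ha, hmem]
  · simp [ha, hmem]

lemma rmm_good_foldl (L : List X) : ∀ (s : RMMState H), RMMGood s →
    RMMGood (L.foldl (rmmStep F c) s) := by
  induction L with
  | nil => intro s h; exact h
  | cons x L ih => intro s _; exact ih _ (rmm_good_step F c s x)

lemma rmm_good_init (h₀ : H) : RMMGood (rmmInit c h₀) := by
  intro ha
  simp only [rmmInit] at ha ⊢
  simp [ha]

lemma rmm_good_run (h₀ : H) (xs : List X) : RMMGood (rmmRun F c h₀ xs) :=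
  rmm_good_foldl F c xs _ (rmm_good_init c h₀)

/-- If memory changed along a segment, some step in the segment selected
that (nonzero) address. -/
lemma rmm_mem_change (L : List X) : ∀ (s : RMMState H) (l : ℕ),
    (L.foldl (rmmStep F c) s).mem l ≠ s.mem l →
    ∃ k, 0 < k ∧ k ≤ L.length ∧
      ((L.take k).foldl (rmmStep F c) s).a = l ∧ l ≠ 0 := by
  induction L with
  | nil => intro s l h; exact absurd rfl h
  | cons x L ih =>
    intro s l h
    by_cases h2 : (L.foldl (rmmStep F c) (rmmStep F c s x)).mem l
        = (rmmStep F c s x).mem l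
    · -- the change happened at the first step
      rw [List.foldl_cons, h2] at h
      simp only [rmmStep] at h
      by_cases hc : l = c (F x s.h) ∧ c (F x s.h) ≠ 0 ∧ (s.mem (c (F x s.h))).isNone
      · refine ⟨1, one_pos, by simp, ?_, ?_⟩
        · simp [rmmStep, hc.1]
        · rw [hc.1]; exact hc.2.1
      · rw [if_neg hc] at h; exact absurd rfl h
    · obtain ⟨k, hk0, hkl, hka, hl0⟩ := ih (rmmStep F c s x) l h2
      exact ⟨k + 1, Nat.succ_pos _, by simpa using hkl, hka, hl0⟩

/-- Simulation: if two states have the same `h` and memories agreeing away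
from a set `D` of slots that is never selected along `L` (as measured on the
`s₂` run), then the final `h`'s agree. -/
lemma rmm_sim (L : List X) : ∀ (s₁ s₂ : RMMState H) (D : ℕ → Prop),
    s₁.h = s₂.h → (∀ l, ¬ D l → s₁.mem l = s₂.mem l) →
    (∀ k, k < L.length → ¬ D (((L.take (k+1)).foldl (rmmStep F c) s₂).a)) →
    (L.foldl (rmmStep F c) s₁).h = (L.foldl (rmmStep F c) s₂).h := by
  induction L with
  | nil => intro s₁ s₂ D hh _ _; exact hh
  | cons x L ih =>
    intro s₁ s₂ D hh hm hacc
    have ha : ¬ D (c (F x s₂.h)) := by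
      have := hacc 0 (Nat.succ_pos _)
      simpa [rmmStep] using this
    have hma : s₁.mem (c (F x s₂.h)) = s₂.mem (c (F x s₂.h)) := hm _ ha
    have hstep_h : (rmmStep F c s₁ x).h = (rmmStep F c s₂ x).h := by
      simp only [rmmStep, hh, hma]
    have hstep_m : ∀ l, ¬ D l →
        (rmmStep F c s₁ x).mem l = (rmmStep F c s₂ x).mem l := by
      intro l hl
      simp only [rmmStep, hh, hma, hm l hl]
    refine ih (rmmStep F c s₁ x) (rmmStep F c s₂ x) D hstep_h hstep_m ?_
    intro k hk
    have := hacc (k + 1) (by simpa using Nat.succ_lt_succ hk)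
    simpa using this

/-- Removing a single maximal cycle preserves the final state. -/
lemma rmm_remove_one (h₀ : H) (xs : List X) (t' t : ℕ)
    (hcyc : IsRMMCycle F c h₀ xs t' t)
    (hmax : ∀ s' s, IsRMMCycle F c h₀ xs s' s → s ≤ t) :
    (rmmRun F c h₀ xs).h = (rmmRun F c h₀ (xs.take t' ++ xs.drop t)).h := by
  obtain ⟨hlt, hlen, haeq, hane⟩ := hcyc
  set s₁ := rmmRun F c h₀ (xs.take t') with hs₁def
  set s₂ := rmmRun F c h₀ (xs.take t) with hs₂def
  set seg := (xs.drop t').take (t - t') with hsegdef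
  have htake : xs.take t = xs.take t' ++ seg := by
    rw [hsegdef, ← List.take_add, Nat.add_sub_cancel' hlt.le]
  have hs₂ : s₂ = seg.foldl (rmmStep F c) s₁ := by
    rw [hs₂def, hs₁def, rmmRun, rmmRun, htake, List.foldl_append]
  have ha1 : s₁.a ≠ 0 := by rw [show s₁.a = rmmAddr F c h₀ xs t' from rfl, haeq]; exact hane
  have ha12 : s₁.a = s₂.a := haeq
  -- equal h's at the two cycle endpoints
  have hh : s₁.h = s₂.h := by
    have g₁ : s₁.mem s₁.a = some s₁.h := rmm_good_run F c h₀ (xs.take t') ha1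
    have g₂ : s₂.mem s₂.a = some s₂.h :=
      rmm_good_run F c h₀ (xs.take t) (ha12 ▸ ha1)
    have gmono : s₂.mem s₁.a = some s₁.h := by
      rw [hs₂]; exact rmm_mem_mono F c seg s₁ s₁.a s₁.h g₁
    rw [ha12] at gmono
    rw [gmono] at g₂
    exact Option.some.inj g₂
  have hlenseg : seg.length = t - t' := by
    rw [hsegdef]
    simp [List.length_take, List.length_drop]
    omega
  have hsegrun : ∀ k, k ≤ t - t' → (seg.take k).foldl (rmmStep F c) s₁
      = rmmRun F c h₀ (xs.take (t' + k)) := by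
    intro k hk
    rw [hs₁def, rmmRun, rmmRun, List.take_add, List.foldl_append, hsegdef,
      List.take_take, min_eq_left hk]
  have hdroprun : ∀ k, ((xs.drop t).take k).foldl (rmmStep F c) s₂
      = rmmRun F c h₀ (xs.take (t + k)) := by
    intro k
    rw [hs₂def, rmmRun, rmmRun, List.take_add, List.foldl_append]
  -- rewrite the goal as folds of the common suffix
  have hgoal1 : rmmRun F c h₀ xs = (xs.drop t).foldl (rmmStep F c) s₂ := by
    conv_lhs => rw [show xs = xs.take t ++ xs.drop t from
      (List.take_append_drop t xs).symm]
    rw [rmmRun, List.foldl_append]; rfl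
  have hgoal2 : rmmRun F c h₀ (xs.take t' ++ xs.drop t)
      = (xs.drop t).foldl (rmmStep F c) s₁ := by
    rw [rmmRun, List.foldl_append]; rfl
  rw [hgoal1, hgoal2]
  have hm : ∀ l, ¬ (fun l => s₂.mem l ≠ s₁.mem l) l → s₁.mem l = s₂.mem l := by
    intro l hl
    exact (not_ne_iff.mp hl).symm
  have hacc : ∀ k, k < (xs.drop t).length →
      ¬ (fun l => s₂.mem l ≠ s₁.mem l)
        ((((xs.drop t).take (k+1)).foldl (rmmStep F c) s₂).a) := by
    intro k hk hD
    set A := ((((xs.drop t).take (k+1)).foldl (rmmStep F c) s₂).a) with hAdef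
    have hA2 : A = rmmAddr F c h₀ xs (t + (k + 1)) := by
      rw [hAdef, hdroprun (k + 1)]; rfl
    rw [hs₂] at hD
    obtain ⟨k0, hk00, hk0l, hk0a, hA0⟩ := rmm_mem_change F c seg s₁ A hD
    rw [hlenseg] at hk0l
    have hA1 : A = rmmAddr F c h₀ xs (t' + k0) := by
      rw [← hk0a, hsegrun k0 hk0l]; rfl
    have hklen : k < xs.length - t := by simpa using hk
    have hcyc2 : IsRMMCycle F c h₀ xs (t' + k0) (t + (k + 1)) := by
      exact ⟨by omega, by omega, by rw [← hA1, ← hA2], by rw [← hA2]; exact hA0⟩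
    have := hmax _ _ hcyc2
    omega
  exact (rmm_sim F c (xs.drop t) s₁ s₂ (fun l => s₂.mem l ≠ s₁.mem l)
    hh hm hacc).symm

end Aux

/-- Cycle-removal lemma (Lemma 1): the final RMM state of an input sequence
equals the final RMM state of its cycle-reduced version. -/
theorem rmm_cycle_reduced_same_final_state {X H : Type*}
    (F : X → H → H) (c : H → ℕ) (h₀ : H) (xs ys : List X)
    (hred : CycleReduced F c h₀ xs ys) :
    (rmmRun F c h₀ xs).h = (rmmRun F c h₀ ys).h := by
  induction hred with
  | of_no_cycle xs _ => rfl
  | of_cycle xs ys t' t hcyc hmax hmin hrec ih =>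
    rw [rmm_remove_one F c h₀ xs t' t hcyc hmax]
    exact ih
end

section
/- (RMMs simulate Moore machines, Theorem 1) Let A = (Q, Σ, Γ, δ, ρ, q₀) be a Moore machine with Q = {1,…,L}. Suppose the reservoir map F : Σ × H → H (with initial state h₀) has the property that the states reached by distinct input sequences of length at most |Q| are pairwise distinct and linearly separable (so that any function on these finitely many states can be realized by the classifier and by a linear readout composed with argmax). Then there exists a classifier c : H → {0,…,L} and an output map such that the resulting RMM, run on any input sequence x₁,…,x_T ∈ Σ*, satisfies a_t = q_t for every t (the RMM's selected memory address equals the Moore-machine state) and its output equals ρ(q_t) at every step. -/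
/-- The pure reservoir run (no memory): `F(ε) = h₀`,
`F(x₁,…,x_T) = F(x_T, F(x₁,…,x_{T-1}))`. -/
def resRun {X H : Type*} (F : X → H → H) (h₀ : H) (xs : List X) : H :=
  xs.foldl (fun h x => F x h) h₀

section Aux

open Classical in
/-- The classifier: look up the (unique) reservoir word of length ≤ L
producing `h` and return the Moore state (plus one) it reaches. -/
noncomputable def theC {σ H : Type*} (L : ℕ) (δ : σ → Fin L → Fin L)
    (q₀ : Fin L) (F : σ → H → H) (h₀ : H) (h : H) : ℕ :=
  if hx : ∃ w : List σ, w.length ≤ L ∧ resRun F h₀ w = h then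
    (mooreRun δ q₀ hx.choose).val + 1
  else 0

open Classical in
/-- The output map. -/
noncomputable def theV {σ H Γ : Type*} (L : ℕ) (δ : σ → Fin L → Fin L)
    (ρ : Fin L → Γ) (q₀ : Fin L) (F : σ → H → H) (h₀ : H) (h : H) : Γ :=
  if hx : ∃ w : List σ, w.length ≤ L ∧ resRun F h₀ w = h then
    ρ (mooreRun δ q₀ hx.choose)
  else ρ q₀

theorem theC_spec {σ H : Type*} (L : ℕ) (δ : σ → Fin L → Fin L)
    (q₀ : Fin L) (F : σ → H → H) (h₀ : H)
    (hsep : ∀ xs ys : List σ, xs.length ≤ L → ys.length ≤ L →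
      resRun F h₀ xs = resRun F h₀ ys → xs = ys)
    (u : List σ) (hu : u.length ≤ L) :
    theC L δ q₀ F h₀ (resRun F h₀ u) = (mooreRun δ q₀ u).val + 1 := by
  classical
  have hx : ∃ w : List σ, w.length ≤ L ∧ resRun F h₀ w = resRun F h₀ u :=
    ⟨u, hu, rfl⟩
  have hcu : hx.choose = u :=
    hsep _ _ hx.choose_spec.1 hu hx.choose_spec.2
  rw [theC, dif_pos hx, hcu]

theorem theV_spec {σ H Γ : Type*} (L : ℕ) (δ : σ → Fin L → Fin L)
    (ρ : Fin L → Γ) (q₀ : Fin L) (F : σ → H → H) (h₀ : H)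
    (hsep : ∀ xs ys : List σ, xs.length ≤ L → ys.length ≤ L →
      resRun F h₀ xs = resRun F h₀ ys → xs = ys)
    (u : List σ) (hu : u.length ≤ L) :
    theV L δ ρ q₀ F h₀ (resRun F h₀ u) = ρ (mooreRun δ q₀ u) := by
  classical
  have hx : ∃ w : List σ, w.length ≤ L ∧ resRun F h₀ w = resRun F h₀ u :=
    ⟨u, hu, rfl⟩
  have hcu : hx.choose = u :=
    hsep _ _ hx.choose_spec.1 hu hx.choose_spec.2
  rw [theV, dif_pos hx, hcu]

/-- The simulation invariant: the memory slots filled are exactly some set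
`S ⊆ {1,…,L}`, each slot `l` stores a reservoir state reached by a short word
whose Moore state (plus one) is `l`, the selected address is the current Moore
state (plus one), and the current slot stores the current reservoir state. -/
def SimInv {σ H : Type*} (L : ℕ) (δ : σ → Fin L → Fin L) (q₀ : Fin L)
    (F : σ → H → H) (h₀ : H) (q : Fin L) (s : RMMState H) : Prop :=
  ∃ S : Finset ℕ, S ⊆ Finset.Icc 1 L ∧
    (∀ l, (s.mem l).isSome ↔ l ∈ S) ∧
    (∀ l h', s.mem l = some h' → ∃ w : List σ, w.length + 1 ≤ S.card ∧
      (mooreRun δ q₀ w).val + 1 = l ∧ resRun F h₀ w = h') ∧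
    s.a = q.val + 1 ∧ s.mem (q.val + 1) = some s.h

theorem resRun_concat {X H : Type*} (F : X → H → H) (h₀ : H)
    (xs : List X) (x : X) :
    resRun F h₀ (xs ++ [x]) = F x (resRun F h₀ xs) := by
  simp [resRun, List.foldl_append]

theorem mooreRun_concat {σ Q : Type*} (δ : σ → Q → Q) (q₀ : Q)
    (xs : List σ) (x : σ) :
    mooreRun δ q₀ (xs ++ [x]) = δ x (mooreRun δ q₀ xs) := by
  simp [mooreRun, List.foldl_append]

theorem rmmRun_concat {X H : Type*} (F : X → H → H) (c : H → ℕ) (h₀ : H)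
    (xs : List X) (x : X) :
    rmmRun F c h₀ (xs ++ [x]) = rmmStep F c (rmmRun F c h₀ xs) x := by
  simp [rmmRun, List.foldl_append]

theorem rmmStep_a {X H : Type*} (F : X → H → H) (c : H → ℕ)
    (s : RMMState H) (x : X) : (rmmStep F c s x).a = c (F x s.h) := rfl

theorem rmmStep_mem {X H : Type*} (F : X → H → H) (c : H → ℕ)
    (s : RMMState H) (x : X) (l : ℕ) :
    (rmmStep F c s x).mem l =
      if l = c (F x s.h) ∧ c (F x s.h) ≠ 0 ∧ (s.mem (c (F x s.h))).isNone
      then some (F x s.h) else s.mem l := rfl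

theorem rmmStep_h {X H : Type*} (F : X → H → H) (c : H → ℕ)
    (s : RMMState H) (x : X) :
    (rmmStep F c s x).h =
      if c (F x s.h) = 0 then F x s.h
      else ((rmmStep F c s x).mem (c (F x s.h))).getD (F x s.h) := rfl

theorem simInv_init {σ H : Type*} (L : ℕ) (δ : σ → Fin L → Fin L)
    (q₀ : Fin L) (F : σ → H → H) (h₀ : H)
    (hsep : ∀ xs ys : List σ, xs.length ≤ L → ys.length ≤ L →
      resRun F h₀ xs = resRun F h₀ ys → xs = ys) :
    SimInv L δ q₀ F h₀ q₀ (rmmInit (theC L δ q₀ F h₀) h₀) := by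
  have hc : theC L δ q₀ F h₀ h₀ = q₀.val + 1 := by
    simpa [resRun, mooreRun] using
      theC_spec L δ q₀ F h₀ hsep [] (by simp)
  refine ⟨{q₀.val + 1}, ?_, ?_, ?_, ?_, ?_⟩
  · intro l hl
    simp only [Finset.mem_singleton] at hl
    simp [hl, Finset.mem_Icc, Nat.succ_le_of_lt q₀.isLt]
  · intro l
    constructor
    · intro hsome
      rw [Finset.mem_singleton]
      by_contra hne
      simp [rmmInit, hc, hne] at hsome
    · intro hl
      rw [Finset.mem_singleton] at hl
      simp [rmmInit, hc, hl]
  · intro l h' hl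
    simp only [rmmInit, hc] at hl
    by_cases hcase : l = q₀.val + 1
    · refine ⟨[], by simp, by simp [mooreRun, hcase], ?_⟩
      rw [if_pos ⟨hcase, by omega⟩] at hl
      simpa [resRun] using Option.some_injective _ hl
    · rw [if_neg (by tauto)] at hl
      simp at hl
  · simp [rmmInit, hc]
  · simp [rmmInit, hc]

theorem simInv_step {σ H : Type*} (L : ℕ) (δ : σ → Fin L → Fin L)
    (q₀ : Fin L) (F : σ → H → H) (h₀ : H)
    (hsep : ∀ xs ys : List σ, xs.length ≤ L → ys.length ≤ L →
      resRun F h₀ xs = resRun F h₀ ys → xs = ys)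
    (q : Fin L) (s : RMMState H) (x : σ)
    (hinv : SimInv L δ q₀ F h₀ q s) :
    SimInv L δ q₀ F h₀ (δ x q) (rmmStep F (theC L δ q₀ F h₀) s x) := by
  obtain ⟨S, hS, hiff, hmem, ha, hq⟩ := hinv
  obtain ⟨w, hwlen, hwq, hwh⟩ := hmem _ _ hq
  have hScard : S.card ≤ L := by
    have := Finset.card_le_card hS
    simpa using this
  have hwq' : mooreRun δ q₀ w = q := by
    ext; omega
  have hlen' : (w ++ [x]).length ≤ L := by
    simp; omega
  have hht : F x s.h = resRun F h₀ (w ++ [x]) := by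
    rw [resRun_concat, hwh]
  have hc : theC L δ q₀ F h₀ (F x s.h) = (δ x q).val + 1 := by
    rw [hht, theC_spec L δ q₀ F h₀ hsep _ hlen', mooreRun_concat, hwq']
  have hane : ((δ x q).val + 1 : ℕ) ≠ 0 := by omega
  by_cases hfull : (s.mem ((δ x q).val + 1)).isNone
  · -- the slot is empty: the reservoir state is written to it
    have hnotin : (δ x q).val + 1 ∉ S := by
      rw [← hiff]
      simp [Option.isNone_iff_eq_none.mp hfull]
    have hm : (rmmStep F (theC L δ q₀ F h₀) s x).mem ((δ x q).val + 1)
        = some (F x s.h) := by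
      rw [rmmStep_mem, hc, if_pos ⟨rfl, hane, hfull⟩]
    refine ⟨insert ((δ x q).val + 1) S, ?_, ?_, ?_, ?_, ?_⟩
    · intro l hl
      rcases Finset.mem_insert.mp hl with h1 | h1
      · subst h1
        simp only [Finset.mem_Icc]
        exact ⟨by omega, (δ x q).isLt⟩
      · exact hS h1
    · intro l
      by_cases hl : l = (δ x q).val + 1
      · subst hl
        simp [hm, Finset.mem_insert]
      · rw [rmmStep_mem, hc, if_neg (by tauto)]
        simp [Finset.mem_insert, hl, hiff]
    · intro l h' hl
      by_cases hl' : l = (δ x q).val + 1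
      · subst hl'
        rw [hm] at hl
        refine ⟨w ++ [x], ?_, ?_, ?_⟩
        · rw [Finset.card_insert_of_notMem hnotin]
          simp
          omega
        · rw [mooreRun_concat, hwq']
        · rw [← hht]
          exact Option.some_injective _ hl
      · rw [rmmStep_mem, hc, if_neg (by tauto)] at hl
        obtain ⟨w', h1, h2, h3⟩ := hmem l h' hl
        exact ⟨w', le_trans h1
          (Finset.card_le_card (Finset.subset_insert _ _)), h2, h3⟩
    · rw [rmmStep_a, hc]
    · rw [hm, rmmStep_h, hc, if_neg hane, hm]
      rfl
  · -- the slot is full: the stored state is recalled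
    have hmemeq : ∀ l, (rmmStep F (theC L δ q₀ F h₀) s x).mem l = s.mem l := by
      intro l
      rw [rmmStep_mem, hc, if_neg]
      rintro ⟨-, -, h3⟩
      exact hfull h3
    have hsome : (s.mem ((δ x q).val + 1)).isSome := by
      rw [Option.isNone_iff_eq_none] at hfull
      exact Option.ne_none_iff_isSome.mp hfull
    obtain ⟨h', hh'⟩ := Option.isSome_iff_exists.mp hsome
    refine ⟨S, hS, ?_, ?_, ?_, ?_⟩
    · intro l
      rw [hmemeq]
      exact hiff l
    · intro l h'' hl
      rw [hmemeq] at hl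
      exact hmem l h'' hl
    · rw [rmmStep_a, hc]
    · rw [hmemeq, rmmStep_h, hc, if_neg hane, hmemeq, hh']
      rfl

theorem simInv_run {σ H : Type*} (L : ℕ) (δ : σ → Fin L → Fin L)
    (q₀ : Fin L) (F : σ → H → H) (h₀ : H)
    (hsep : ∀ xs ys : List σ, xs.length ≤ L → ys.length ≤ L →
      resRun F h₀ xs = resRun F h₀ ys → xs = ys)
    (xs : List σ) :
    SimInv L δ q₀ F h₀ (mooreRun δ q₀ xs)
      (rmmRun F (theC L δ q₀ F h₀) h₀ xs) := by
  induction xs using List.reverseRecOn with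
  | nil =>
    simpa [rmmRun, mooreRun] using simInv_init L δ q₀ F h₀ hsep
  | append_singleton ys y ih =>
    rw [rmmRun_concat, mooreRun_concat]
    exact simInv_step L δ q₀ F h₀ hsep _ _ y ih

end Aux

/-- Theorem 1: RMMs simulate Moore machines. Let `A` be a Moore machine with
states `{1,…,L}` (modeled as `Fin L`, state `q` carrying the number `q+1`).
If the reservoir `F` with initial state `h₀` maps distinct input sequences of
length at most `L = |Q|` to distinct states, then there is a classifier
`c : H → {0,…,L}` and an output map `V` such that on every input sequence the
RMM's selected memory address equals (the number of) the Moore-machine state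
and its output equals `ρ(q_t)` at every step. -/

theorem rmm_simulates_moore {σ H Γ : Type*} (L : ℕ)
    (δ : σ → Fin L → Fin L) (ρ : Fin L → Γ) (q₀ : Fin L)
    (F : σ → H → H) (h₀ : H)
    (hsep : ∀ xs ys : List σ, xs.length ≤ L → ys.length ≤ L →
      resRun F h₀ xs = resRun F h₀ ys → xs = ys) :
    ∃ (c : H → ℕ) (V : H → Γ), (∀ h, c h ≤ L) ∧
      ∀ (xs : List σ) (t : ℕ), t ≤ xs.length →
        (rmmRun F c h₀ (xs.take t)).a = (mooreRun δ q₀ (xs.take t)).val + 1 ∧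
        V ((rmmRun F c h₀ (xs.take t)).h) = ρ (mooreRun δ q₀ (xs.take t)) := by
  classical
  refine ⟨theC L δ q₀ F h₀, theV L δ ρ q₀ F h₀, ?_, ?_⟩
  · intro h
    rw [theC]
    split
    · exact Nat.succ_le_of_lt (Fin.isLt _)
    · exact Nat.zero_le _
  · intro xs t _
    obtain ⟨S, hS, hiff, hmem, ha, hq⟩ := simInv_run L δ q₀ F h₀ hsep (xs.take t)
    obtain ⟨w, hwlen, hwq, hwh⟩ := hmem _ _ hq
    have hScard : S.card ≤ L := by
      have := Finset.card_le_card hS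
      simpa using this
    have hwq' : mooreRun δ q₀ w = mooreRun δ q₀ (xs.take t) := by
      ext; omega
    refine ⟨ha, ?_⟩
    rw [← hwh, theV_spec L δ ρ q₀ F h₀ hsep w (by omega), hwq']
end

section
/- An abstract version of Theorem 1: let A = (Q, Σ, δ, q₀) be a finite-state automaton and let F : Σ × H → H, h₀ ∈ H be any dynamical system such that the map sending each cycle-free-or-single-cycle input sequence (length ≤ |Q|) to its final F-state is injective. Then the classifier c defined on these finitely many states by c(final F-state of sequence x̄) = Δ_A(x̄) (the automaton state reached by x̄), extended by 0 elsewhere, makes the RMM built from (F, h₀, c) satisfy a_t = q_t for all t on every input sequence, where q_t is the automaton state sequence. -/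
/-- The sequences in `∪_q (X₀(q) ∪ X₁(q))`: sequences of length at most `L`
whose proper prefixes visit pairwise distinct automaton states (cycle-free,
or ending with exactly one repetition at the final position). -/
def GoodSeq {σ : Type*} (L : ℕ) (δ : σ → Fin L → Fin L) (q₀ : Fin L)
    (xs : List σ) : Prop :=
  xs.length ≤ L ∧
    Function.Injective (fun i : Fin xs.length => mooreRun δ q₀ (xs.take i))

open Classical in
/-- The classifier of Theorem 1: on the reservoir state of a
cycle-free-or-single-cycle sequence `x̄` it outputs the automaton state
`Δ_A(x̄)` (as the number `Δ_A(x̄)+1 ∈ {1,…,L}`), and `0` elsewhere. -/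
noncomputable def mooreCls {σ H : Type*} (L : ℕ)
    (δ : σ → Fin L → Fin L) (q₀ : Fin L)
    (F : σ → H → H) (h₀ : H) (h : H) : ℕ :=
  if hx : ∃ xs : List σ, GoodSeq L δ q₀ xs ∧ resRun F h₀ xs = h then
    (mooreRun δ q₀ hx.choose).val + 1
  else 0

/-!
By induction along the input, the current RMM state is the reservoir state of a cycle-free
sequence ending in the current automaton state `q`, and it is stored in slot `q + 1`. Feeding the
next symbol gives a sequence in `X₀ ∪ X₁`, on whose reservoir states the classifier is exact by
injectivity, so slot `q' + 1` is selected. Either that slot already holds a cycle-free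
representative of `q'` and is read, or it is empty; then `q'` is none of the (stored) prefix
states, so the extended sequence is itself cycle-free and is written.
-/

section Runs

variable {σ Q H : Type*}

theorem mooreRun_append_singleton (δ : σ → Q → Q) (q₀ : Q) (xs : List σ) (x : σ) :
    mooreRun δ q₀ (xs ++ [x]) = δ x (mooreRun δ q₀ xs) := by
  simp [mooreRun]

theorem resRun_append_singleton (F : σ → H → H) (h₀ : H) (xs : List σ) (x : σ) :
    resRun F h₀ (xs ++ [x]) = F x (resRun F h₀ xs) := by
  simp [resRun]

theorem rmmRun_append_singleton (F : σ → H → H) (c : H → ℕ) (h₀ : H) (xs : List σ) (x : σ) :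
    rmmRun F c h₀ (xs ++ [x]) = rmmStep F c (rmmRun F c h₀ xs) x := by
  simp [rmmRun]

end Runs

section Step

variable {σ H : Type*} {F : σ → H → H} {c : H → ℕ} {s : RMMState H} {x : σ} {k : ℕ}

theorem rmmStep_of_mem_eq_some {h : H} (hk : c (F x s.h) = k) (hk0 : k ≠ 0)
    (hmem : s.mem k = some h) : rmmStep F c s x = ⟨h, k, s.mem⟩ := by
  subst hk
  simp only [rmmStep, hmem, Option.isNone_some, Bool.false_eq_true, and_false, if_false, hk0,
    Option.getD_some]

theorem rmmStep_of_mem_eq_none (hk : c (F x s.h) = k) (hk0 : k ≠ 0) (hmem : s.mem k = none) :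
    rmmStep F c s x = ⟨F x s.h, k, Function.update s.mem k (some (F x s.h))⟩ := by
  subst hk
  simp only [rmmStep, RMMState.mk.injEq]
  refine ⟨by simp [hk0, hmem], trivial, funext fun l => ?_⟩
  by_cases hl : l = c (F x s.h) <;> simp [hl, hk0, hmem]

end Step

theorem isSome_update_some_iff {α β : Type*} [DecidableEq α] {m : α → Option β} {k l : α}
    {v : β} : (Function.update m k (some v) l).isSome ↔ l = k ∨ (m l).isSome := by
  by_cases hl : l = k <;> simp [hl]

section CycleFree

variable {σ Q : Type*}

/-- The sequences of `X₀(q)`, `q` being the final state. -/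
def CycleFree (δ : σ → Q → Q) (q₀ : Q) (xs : List σ) : Prop :=
  Set.InjOn (fun i => mooreRun δ q₀ (xs.take i)) (Set.Iic xs.length)

variable {δ : σ → Q → Q} {q₀ : Q}

theorem cycleFree_nil : CycleFree δ q₀ [] := fun i hi j hj _ => by simp_all

theorem CycleFree.length_lt [Fintype Q] {xs : List σ} (h : CycleFree δ q₀ xs) :
    xs.length < Fintype.card Q := by
  have := Finset.card_le_card_of_injOn _ (fun _ _ => Finset.mem_univ _)
    (by rwa [Finset.coe_Iic] : Set.InjOn (fun i => mooreRun δ q₀ (xs.take i))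
      (Finset.Iic xs.length : Set ℕ))
  simpa using this

theorem CycleFree.append_singleton {xs : List σ} (h : CycleFree δ q₀ xs) {x : σ}
    (hnew : ∀ i ≤ xs.length, mooreRun δ q₀ (xs.take i) ≠ mooreRun δ q₀ (xs ++ [x])) :
    CycleFree δ q₀ (xs ++ [x]) := by
  have hIic : Set.Iic (xs ++ [x]).length = insert (xs.length + 1) (Set.Iic xs.length) := by
    simpa using Order.Iic_succ xs.length
  have hprefix : Set.EqOn (fun i => mooreRun δ q₀ ((xs ++ [x]).take i))
      (fun i => mooreRun δ q₀ (xs.take i)) (Set.Iic xs.length) := fun i hi => by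
    simp [List.take_append_of_le_length (Set.mem_Iic.mp hi)]
  rw [CycleFree, hIic, Set.injOn_insert (by simp), hprefix.injOn_iff, hprefix.image_eq]
  refine ⟨h, ?_⟩
  rintro ⟨i, hi, heq⟩
  exact hnew i hi (by simpa [List.take_of_length_le] using heq)

theorem CycleFree.goodSeq_append_singleton {L : ℕ} {δ : σ → Fin L → Fin L} {q₀ : Fin L}
    {xs : List σ} (h : CycleFree δ q₀ xs) (x : σ) : GoodSeq L δ q₀ (xs ++ [x]) := by
  refine ⟨by simpa using h.length_lt, fun i j hij => Fin.ext ?_⟩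
  have hi : (i : ℕ) ≤ xs.length := Nat.le_of_lt_succ (by simpa using i.2)
  have hj : (j : ℕ) ≤ xs.length := Nat.le_of_lt_succ (by simpa using j.2)
  simp only [List.take_append_of_le_length hi, List.take_append_of_le_length hj] at hij
  exact h hi hj hij

end CycleFree

section Simulation

variable {σ H : Type*} {L : ℕ} {δ : σ → Fin L → Fin L} {q₀ : Fin L} {F : σ → H → H} {h₀ : H}
  {c : H → ℕ}

def IsStateClassifier (δ : σ → Fin L → Fin L) (q₀ : Fin L) (F : σ → H → H) (h₀ : H)
    (c : H → ℕ) : Prop :=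
  ∀ zs, GoodSeq L δ q₀ zs → c (resRun F h₀ zs) = (mooreRun δ q₀ zs).val + 1

theorem isStateClassifier_mooreCls
    (hsep : ∀ xs ys : List σ, GoodSeq L δ q₀ xs → GoodSeq L δ q₀ ys →
      resRun F h₀ xs = resRun F h₀ ys → xs = ys) :
    IsStateClassifier δ q₀ F h₀ (mooreCls L δ q₀ F h₀) := by
  intro zs hz
  have hx : ∃ xs, GoodSeq L δ q₀ xs ∧ resRun F h₀ xs = resRun F h₀ zs := ⟨zs, hz, rfl⟩
  obtain ⟨hgood, hrun⟩ := hx.choose_spec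
  rw [mooreCls, dif_pos hx, hsep _ _ hgood hz hrun]

/-- The prefix closure of the filled slots (last clause of `mem_spec`) is what keeps the
sequence written into a newly filled slot cycle-free. -/
structure SimulatesAt (δ : σ → Fin L → Fin L) (q₀ : Fin L) (F : σ → H → H) (h₀ : H)
    (s : RMMState H) (q : Fin L) : Prop where
  mem_spec : ∀ (p : Fin L) (h : H), s.mem (p.val + 1) = some h →
    ∃ ys, CycleFree δ q₀ ys ∧ mooreRun δ q₀ ys = p ∧ resRun F h₀ ys = h ∧
      ∀ i ≤ ys.length, (s.mem ((mooreRun δ q₀ (ys.take i)).val + 1)).isSome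
  mem_current : s.mem (q.val + 1) = some s.h
  a_eq : s.a = q.val + 1

theorem simulatesAt_rmmInit (hc : IsStateClassifier δ q₀ F h₀ c) :
    SimulatesAt δ q₀ F h₀ (rmmInit c h₀) q₀ := by
  have hc₀ : c h₀ = q₀.val + 1 := hc [] ⟨Nat.zero_le _, fun i => i.elim0⟩
  have hmem : ∀ p : Fin L, (rmmInit c h₀).mem (p.val + 1) = if p = q₀ then some h₀ else none :=
    fun p => by simp [rmmInit, hc₀, Fin.val_inj]
  refine ⟨fun p h hp => ?_, (hmem q₀).trans (if_pos rfl), hc₀⟩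
  rw [hmem] at hp
  split_ifs at hp with hpq
  cases hp
  refine ⟨[], cycleFree_nil, by simp [mooreRun, hpq], rfl, fun i hi => ?_⟩
  simp [Nat.le_zero.mp hi, mooreRun, hmem]

theorem SimulatesAt.rmmStep {s : RMMState H} {q : Fin L} (hs : SimulatesAt δ q₀ F h₀ s q)
    (hc : IsStateClassifier δ q₀ F h₀ c) (x : σ) :
    SimulatesAt δ q₀ F h₀ (rmmStep F c s x) (δ x q) := by
  obtain ⟨ys, hcf, hys, hrun, hprefix⟩ := hs.mem_spec q s.h hs.mem_current
  have hys' : mooreRun δ q₀ (ys ++ [x]) = δ x q := by rw [mooreRun_append_singleton, hys]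
  have hF : F x s.h = resRun F h₀ (ys ++ [x]) := by rw [resRun_append_singleton, hrun]
  have hcx : c (F x s.h) = (δ x q).val + 1 := by
    rw [hF, hc _ (hcf.goodSeq_append_singleton x), hys']
  cases hslot : s.mem ((δ x q).val + 1) with
  | some h' =>
    rw [rmmStep_of_mem_eq_some hcx (Nat.succ_ne_zero _) hslot]
    exact ⟨hs.mem_spec, hslot, rfl⟩
  | none =>
    rw [rmmStep_of_mem_eq_none hcx (Nat.succ_ne_zero _) hslot]
    have hgrow : ∀ l, (s.mem l).isSome →
        (Function.update s.mem ((δ x q).val + 1) (some (F x s.h)) l).isSome :=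
      fun l hl => isSome_update_some_iff.mpr (Or.inr hl)
    have hnew : ∀ i ≤ ys.length, mooreRun δ q₀ (ys.take i) ≠ mooreRun δ q₀ (ys ++ [x]) :=
      fun i hi heq => by simpa [heq, hys', hslot] using hprefix i hi
    refine ⟨fun p h hp => ?_, by simp, rfl⟩
    dsimp only at hp ⊢
    by_cases hpq : p = δ x q
    · subst hpq
      refine ⟨ys ++ [x], hcf.append_singleton hnew, hys', by simpa [hF] using hp, fun i hi => ?_⟩
      rcases Nat.lt_or_eq_of_le (by simpa using hi : i ≤ ys.length + 1) with hi' | rfl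
      · rw [List.take_append_of_le_length (Nat.le_of_lt_succ hi')]
        exact hgrow _ (hprefix i (Nat.le_of_lt_succ hi'))
      · simp [List.take_of_length_le, hys']
    · rw [Function.update_of_ne (by simpa [Fin.val_inj] using hpq)] at hp
      obtain ⟨zs, hzs, hzq, hzrun, hzprefix⟩ := hs.mem_spec p h hp
      exact ⟨zs, hzs, hzq, hzrun, fun i hi => hgrow _ (hzprefix i hi)⟩

theorem simulatesAt_rmmRun (hc : IsStateClassifier δ q₀ F h₀ c) (xs : List σ) :
    SimulatesAt δ q₀ F h₀ (rmmRun F c h₀ xs) (mooreRun δ q₀ xs) := by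
  induction xs using List.reverseRecOn with
  | nil => exact simulatesAt_rmmInit hc
  | append_singleton xs x ih =>
    rw [rmmRun_append_singleton, mooreRun_append_singleton]
    exact ih.rmmStep hc x

end Simulation

/-- Abstract version of Theorem 1: if the map sending each
cycle-free-or-single-cycle input sequence (length ≤ `|Q|`) to its final
reservoir state is injective, then the RMM built from `(F, h₀)` and the
classifier `mooreCls` selects at every step exactly the automaton state:
`a_t = q_t` (encoded as `q_t + 1`) for all `t` on every input sequence. -/
theorem rmm_cls_simulates_automaton {σ H : Type*} (L : ℕ)
    (δ : σ → Fin L → Fin L) (q₀ : Fin L) (F : σ → H → H) (h₀ : H)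
    (hsep : ∀ xs ys : List σ, GoodSeq L δ q₀ xs → GoodSeq L δ q₀ ys →
      resRun F h₀ xs = resRun F h₀ ys → xs = ys) :
    ∀ (xs : List σ) (t : ℕ), t ≤ xs.length →
      (rmmRun F (mooreCls L δ q₀ F h₀) h₀ (xs.take t)).a
        = (mooreRun δ q₀ (xs.take t)).val + 1 := by
  intro xs t _
  exact (simulatesAt_rmmRun (isStateClassifier_mooreCls hsep) _).a_eq
end

section
/- Key step of the appendix RNN construction: with the weights as defined, if h_{2t−2} = e_{q_{t−1}} then the odd-step state h_{2t−1} is the one-hot vector with h_{2t−1,k} = 1 exactly when k > L, ⌊(k−1)/L⌋ = i with e_i = x_t, and k ≡ q_{t−1} (mod L); i.e., h_{2t−1} one-hot encodes the pair (q_{t−1}, x_t). -/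
/-- The Heaviside step function. -/
noncomputable def heaviside (r : ℝ) : ℝ := if 0 < r then 1 else 0

/-- The one-hot (unit basis) vector `e_i`. -/
def onehot {α : Type*} [DecidableEq α] (i : α) : α → ℝ :=
  fun j => if j = i then 1 else 0

/-- Neuron index set of the appendix construction: `L` state neurons
(`Sum.inl`) and `m·L` pair neurons (`Sum.inr (i, j)` encodes the pair of
input `e_i` and previous state `j`). -/
abbrev NIdx (L m : ℕ) := Fin L ⊕ (Fin m × Fin L)

/-- The recurrent weight matrix `W` of the appendix construction: pair neuron
`(i, j)` feeds state neuron `k` iff `δ(e_i, j) = k`, and state neuron `j` is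
copied into every pair neuron `(i, j)`; all other weights are `0`. -/
def Wmat {L m : ℕ} (δ : Fin m → Fin L → Fin L) :
    Matrix (NIdx L m) (NIdx L m) ℝ :=
  fun k l => match k, l with
    | .inl k, .inr (i, j) => if δ i j = k then 1 else 0
    | .inr (_, j), .inl l => if j = l then 1 else 0
    | _, _ => 0

/-- The input weight matrix `U`: input coordinate `i` is injected into every
pair neuron `(i, j)`; state neurons receive no input. -/
def Umat (L m : ℕ) : Matrix (NIdx L m) (Fin m) ℝ :=
  fun k i' => match k with
    | .inr (i, _) => if i = i' then 1 else 0
    | .inl _ => 0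

/-- The bias vector: `-1/2` for state neurons, `-3/2` for pair neurons. -/
noncomputable def bvec (L m : ℕ) : NIdx L m → ℝ :=
  fun k => match k with
    | .inl _ => -(1 / 2)
    | .inr _ => -(3 / 2)

/-- One RNN step `h ↦ σ(U·u + W·h + b)` with Heaviside activation. -/
noncomputable def rnnStep {L m : ℕ} (δ : Fin m → Fin L → Fin L)
    (u : Fin m → ℝ) (h : NIdx L m → ℝ) : NIdx L m → ℝ :=
  fun k => heaviside (((Umat L m).mulVec u + (Wmat δ).mulVec h + bvec L m) k)

/-- Key step of the appendix RNN construction: with the weights as defined,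
if the previous state one-hot encodes the Moore state `q` (a state neuron),
then the odd step with input `e_x` yields exactly the one-hot encoding of the
pair `(q, x)` (the pair neuron `(x, q)`). -/
theorem rnn_odd_step_encodes_pair {L m : ℕ} (δ : Fin m → Fin L → Fin L)
    (q : Fin L) (x : Fin m) :
    rnnStep δ (onehot x) (onehot (Sum.inl q)) = onehot (Sum.inr (x, q)) := by
  funext k
  cases k with
  | inl k =>
    simp only [rnnStep, Matrix.mulVec, dotProduct, Umat, Wmat, bvec, onehot, heaviside,
      Pi.add_apply, Fintype.sum_sum_type, Fintype.sum_prod_type, mul_ite, mul_one, mul_zero,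
      ite_mul, one_mul, zero_mul, Sum.inl.injEq, Sum.inr.injEq, reduceCtorEq]
    simp
  | inr ij =>
    obtain ⟨i, j⟩ := ij
    simp only [rnnStep, Matrix.mulVec, dotProduct, Umat, Wmat, bvec, onehot, heaviside,
      Pi.add_apply, Fintype.sum_sum_type, Fintype.sum_prod_type, mul_ite, mul_one, mul_zero,
      ite_mul, one_mul, zero_mul, Sum.inl.injEq, Sum.inr.injEq, reduceCtorEq]
    simp only [Finset.sum_ite_eq, Finset.sum_ite_eq', Finset.mem_univ, if_true,
      Finset.sum_const_zero, Prod.mk.injEq]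
    by_cases hi : i = x <;> by_cases hj : j = q <;>
      simp [hi, hj, eq_comm] <;> norm_num
end

section
/- Second key step of the appendix RNN construction: if h_{2t−1} one-hot encodes the pair (q_{t−1}, x_t) (i.e., h_{2t−1,l} = 1 exactly for the unique l > L with ⌊(l−1)/L⌋ = i, e_i = x_t, l ≡ q_{t−1} mod L), then the next state (with zero input) is h_{2t} = e_{q_t} where q_t = δ(x_t, q_{t−1}). -/
lemma mulVec_onehot {n : Type*} [Fintype n] [DecidableEq n]
    (M : Matrix n n ℝ) (i : n) : M.mulVec (onehot i) = fun k => M k i := by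
  funext k
  simp [Matrix.mulVec, dotProduct, onehot, mul_ite]

/-- Second key step of the appendix RNN construction: if the state one-hot
encodes the pair `(q, x)` (pair neuron `(x, q)` active), then the next step
with zero input yields the one-hot encoding of the state `δ(e_x, q)`. -/
theorem rnn_even_step_encodes_state {L m : ℕ} (δ : Fin m → Fin L → Fin L)
    (q : Fin L) (x : Fin m) :
    rnnStep δ 0 (onehot (Sum.inr (x, q))) = onehot (Sum.inl (δ x q)) := by
  funext k
  simp only [rnnStep, Matrix.mulVec_zero, mulVec_onehot, Pi.add_apply, Pi.zero_apply, zero_add]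
  rcases k with k | ⟨i, j⟩
  · by_cases h : δ x q = k
    · simp [heaviside, Wmat, bvec, onehot, h]; norm_num
    · simp [heaviside, Wmat, bvec, onehot, h, Ne.symm h]
  · simp [heaviside, Wmat, bvec, onehot]; norm_num
end
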